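/- Let F be a finite field with q elements, R ∈ (0,1), and n, r integers with R·n ≤ r ≤ n. Let α ∈ [0, 1 − 1/q] satisfy H_q(α) = R/8. Then the number of subspaces U ∈ Gr(n, n−r) for which there exist an integer m with 1 ≤ m ≤ r and an α-sparse m-dimensional subspace V ⊆ F^n with dim(U ∩ V) ≥ m/2 is at most (4·q^{−r/8}/(1 − q^{−r/8}))·|Gr(n, n−r)| (a real-number inequality, with q^{−r/8} the real power of q with exponent −r/8). -/

import Mathlib

open Matrix Finset

namespace RTC

variable {F : Type*} [Field F] [Fintype F]

/-- All columns of the matrix `a` lie in the code `C`. -/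
def colsIn {n1 n2 : ℕ} (C : Submodule F (Fin n1 → F)) (a : Matrix (Fin n1) (Fin n2) F) : Prop :=
  ∀ j : Fin n2, (fun i => a i j) ∈ C

/-- All rows of the matrix `a` lie in the code `C`. -/
def rowsIn {n1 n2 : ℕ} (C : Submodule F (Fin n2 → F)) (a : Matrix (Fin n1) (Fin n2) F) : Prop :=
  ∀ i : Fin n1, (fun j => a i j) ∈ C

/-- Hamming weight of a matrix: the number of nonzero entries. -/
noncomputable def mwt {n1 n2 : ℕ} (x : Matrix (Fin n1) (Fin n2) F) : ℕ :=
  Nat.card {p : Fin n1 × Fin n2 // x p.1 p.2 ≠ 0}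

/-- The number of nonzero columns of a matrix (`|x|_1`). -/
noncomputable def colWt {n1 n2 : ℕ} (x : Matrix (Fin n1) (Fin n2) F) : ℕ :=
  Nat.card {j : Fin n2 // (fun i => x i j) ≠ 0}

/-- The number of nonzero rows of a matrix (`|x|_2`). -/
noncomputable def rowWt {n1 n2 : ℕ} (x : Matrix (Fin n1) (Fin n2) F) : ℕ :=
  Nat.card {i : Fin n1 // (fun j => x i j) ≠ 0}

/-- Hamming weight of a vector. -/
noncomputable def vwt {n : ℕ} (v : Fin n → F) : ℕ := Nat.card {i : Fin n // v i ≠ 0}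

/-- Membership in `C1 ⊞ C2`: `c = a1 + a2` with all columns of `a1` in `C1`
and all rows of `a2` in `C2`. -/
def memBoxPlus {n1 n2 : ℕ} (C1 : Submodule F (Fin n1 → F)) (C2 : Submodule F (Fin n2 → F))
    (c : Matrix (Fin n1) (Fin n2) F) : Prop :=
  ∃ a1 a2 : Matrix (Fin n1) (Fin n2) F, colsIn C1 a1 ∧ rowsIn C2 a2 ∧ c = a1 + a2

/-- The pair `(C1, C2)` is `ρ`-product-expanding: every `c ∈ C1 ⊞ C2` can be written as
`c = a1 + a2` (columns of `a1` in `C1`, rows of `a2` in `C2`) with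
`ρ·(n1·|a1|_1 + n2·|a2|_2) ≤ |c|`. -/
def ProductExpanding {n1 n2 : ℕ} (ρ : ℝ) (C1 : Submodule F (Fin n1 → F))
    (C2 : Submodule F (Fin n2 → F)) : Prop :=
  ∀ c : Matrix (Fin n1) (Fin n2) F, memBoxPlus C1 C2 c →
    ∃ a1 a2 : Matrix (Fin n1) (Fin n2) F, colsIn C1 a1 ∧ rowsIn C2 a2 ∧ c = a1 + a2 ∧
      ρ * ((n1 : ℝ) * (colWt a1 : ℝ) + (n2 : ℝ) * (rowWt a2 : ℝ)) ≤ (mwt c : ℝ)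

/-- `C1 ⊗ F^{n2}` viewed as a submodule of matrices: all columns lie in `C`. -/
def colSp {n1 : ℕ} (n2 : ℕ) (C : Submodule F (Fin n1 → F)) :
    Submodule F (Matrix (Fin n1) (Fin n2) F) where
  carrier := {a | ∀ j : Fin n2, (fun i => a i j) ∈ C}
  add_mem' := by
    intro a b ha hb j
    exact C.add_mem (ha j) (hb j)
  zero_mem' := by
    intro j
    exact C.zero_mem
  smul_mem' := by
    intro r a ha j
    exact C.smul_mem r (ha j)

/-- `F^{n1} ⊗ C` viewed as a submodule of matrices: all rows lie in `C`. -/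
def rowSp (n1 : ℕ) {n2 : ℕ} (C : Submodule F (Fin n2 → F)) :
    Submodule F (Matrix (Fin n1) (Fin n2) F) where
  carrier := {a | ∀ i : Fin n1, (fun j => a i j) ∈ C}
  add_mem' := by
    intro a b ha hb i
    exact C.add_mem (ha i) (hb i)
  zero_mem' := by
    intro i
    exact C.zero_mem
  smul_mem' := by
    intro r a ha i
    exact C.smul_mem r (ha i)

/-- The tensor product code `C1 ⊗ C2`: all columns in `C1` and all rows in `C2`. -/
def tens {n1 n2 : ℕ} (C1 : Submodule F (Fin n1 → F)) (C2 : Submodule F (Fin n2 → F)) :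
    Submodule F (Matrix (Fin n1) (Fin n2) F) :=
  colSp n2 C1 ⊓ rowSp n1 C2

/-- The dual code `C^⊥`. -/
def dualCode {n : ℕ} (C : Submodule F (Fin n → F)) : Submodule F (Fin n → F) where
  carrier := {y | ∀ c ∈ C, ∑ i, y i * c i = 0}
  add_mem' := by
    intro a b ha hb c hc
    have h2 : ∑ i, (a + b) i * c i = (∑ i, a i * c i) + ∑ i, b i * c i := by
      rw [← Finset.sum_add_distrib]; congr 1; funext i
      show (a i + b i) * c i = _; ring
    rw [h2, ha c hc, hb c hc, add_zero]
  zero_mem' := by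
    intro c hc
    simp
  smul_mem' := by
    intro r a ha c hc
    have h2 : ∑ i, (r • a) i * c i = r * ∑ i, a i * c i := by
      rw [Finset.mul_sum]; congr 1; funext i
      show (r * a i) * c i = _; ring
    rw [h2, ha c hc, mul_zero]

/-- Normalized distance `δ(x, S) = min_{s ∈ S} |x − s| / n²` of a matrix to a set of matrices. -/
noncomputable def ndelta {n : ℕ} (x : Matrix (Fin n) (Fin n) F)
    (S : Set (Matrix (Fin n) (Fin n) F)) : ℝ :=
  sInf ((fun s => (mwt (x - s) : ℝ) / ((n : ℝ) ^ 2)) '' S)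

/-- The code `C1 ⊗ C2` is `ρ`-robustly testable. -/
def RobustlyTestable {n : ℕ} (ρ : ℝ) (C1 C2 : Submodule F (Fin n → F)) : Prop :=
  ∀ x : Matrix (Fin n) (Fin n) F,
    ρ * ndelta x (tens C1 C2 : Set (Matrix (Fin n) (Fin n) F)) ≤
      (ndelta x (colSp n C1 : Set (Matrix (Fin n) (Fin n) F)) +
       ndelta x (rowSp n C2 : Set (Matrix (Fin n) (Fin n) F))) / 2

/-- The code `C1 ⊗ C2` is `ρ`-agreement testable. -/
def AgreementTestable {n : ℕ} (ρ : ℝ) (C1 C2 : Submodule F (Fin n → F)) : Prop :=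
  ∀ c1 c2 : Matrix (Fin n) (Fin n) F, colsIn C1 c1 → rowsIn C2 c2 →
    ∃ c : Matrix (Fin n) (Fin n) F, colsIn C1 c ∧ rowsIn C2 c ∧
      ρ * ((colWt (c1 - c) : ℝ) + (rowWt (c2 - c) : ℝ)) ≤ (mwt (c1 - c2) : ℝ) / (n : ℝ)

/-- The `q`-ary entropy function. -/
noncomputable def Hq (q : ℕ) (x : ℝ) : ℝ :=
  x * Real.logb q (q - 1) - x * Real.logb q x - (1 - x) * Real.logb q (1 - x)

/-- A subspace is `α`-sparse if it is spanned by vectors of Hamming weight at most `α·n`. -/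
def Sparse {n : ℕ} (α : ℝ) (V : Submodule F (Fin n → F)) : Prop :=
  ∃ S : Set (Fin n → F), (∀ v ∈ S, (vwt v : ℝ) ≤ α * n) ∧ Submodule.span F S = V

/-- The Gaussian (`q`-ary) binomial coefficient, as a real number. -/
noncomputable def qBinom (q n k : ℕ) : ℝ :=
  ∏ i ∈ Finset.range k, ((q : ℝ) ^ (n - i) - 1) / ((q : ℝ) ^ (k - i) - 1)

/-- Minimal Hamming distance from a vector to a code. -/
noncomputable def vdist {n : ℕ} (v : Fin n → F) (C : Submodule F (Fin n → F)) : ℕ :=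
  sInf {d : ℕ | ∃ c ∈ C, vwt (v - c) = d}

/-- A codeword `x ∈ C1 ⊞ C2` is `Δ`-minimal. -/
def DeltaMinimal {n : ℕ} (C1 C2 : Submodule F (Fin n → F)) (Δ : ℝ)
    (x : Matrix (Fin n) (Fin n) F) : Prop :=
  (∀ i : Fin n, (vwt (fun j => x i j) : ℝ) ≤ (vdist (fun j => x i j) C2 : ℝ) + Δ) ∧
  (∀ j : Fin n, (vwt (fun i => x i j) : ℝ) ≤ (vdist (fun i => x i j) C1 : ℝ) + Δ)

/-- Hamming weight of the submatrix of `x` with rows in `A` and columns in `B`. -/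
noncomputable def subWt {n : ℕ} (x : Matrix (Fin n) (Fin n) F) (A B : Finset (Fin n)) : ℕ :=
  Nat.card {p : Fin n × Fin n // p.1 ∈ A ∧ p.2 ∈ B ∧ x p.1 p.2 ≠ 0}

/-- The pair `(C1, C2)` is `(s, m, β)`-product-expanding. -/
def SMBExpanding {n : ℕ} (s m β : ℝ) (C1 C2 : Submodule F (Fin n → F)) : Prop :=
  ∀ x : Matrix (Fin n) (Fin n) F, memBoxPlus C1 C2 x → x ≠ 0 →
    DeltaMinimal C1 C2 (β * n) x →
    ∀ A B : Finset (Fin n), (n : ℝ) - m ≤ (A.card : ℝ) → (n : ℝ) - m ≤ (B.card : ℝ) →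
      s ≤ (subWt x A B : ℝ)

/-- The function `c` restricted to every line parallel to axis `i` lies in `C i`
(membership in `C^{(i)}`). -/
def axisIn {ι : Type*} [DecidableEq ι] {n : ι → ℕ} (C : ∀ i, Submodule F (Fin (n i) → F))
    (i : ι) (a : (∀ j, Fin (n j)) → F) : Prop :=
  ∀ y : ∀ j, Fin (n j), (fun s => a (Function.update y i s)) ∈ C i

/-- The number of grid points lying on a line parallel to axis `i` on which `a` is not
identically zero.  Since every such line contains exactly `n i` points, this equals
`n i · |a|_i` where `|a|_i` is the number of nonzero lines parallel to axis `i`. -/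
noncomputable def lineCnt {ι : Type*} [DecidableEq ι] {n : ι → ℕ} (i : ι)
    (a : (∀ j, Fin (n j)) → F) : ℕ :=
  Nat.card {y : ∀ j, Fin (n j) // (fun s : Fin (n i) => a (Function.update y i s)) ≠ 0}

/-- Hamming weight of an element of `F^{n_1 × … × n_m}`. -/
noncomputable def gwt {ι : Type*} {n : ι → ℕ} (a : (∀ j, Fin (n j)) → F) : ℕ :=
  Nat.card {y : ∀ j, Fin (n j) // a y ≠ 0}

/-- The collection `C` is `ρ`-product-expanding: every `c ∈ C_1 ⊞ … ⊞ C_m` can be written as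
`c = Σ_i a_i` with `a_i ∈ C^{(i)}` and `ρ · Σ_i n_i·|a_i|_i ≤ |c|`
(note `lineCnt i (a i) = n_i · |a_i|_i`). -/
def MProdExpanding {ι : Type*} [Fintype ι] [DecidableEq ι] {n : ι → ℕ} (ρ : ℝ)
    (C : ∀ i, Submodule F (Fin (n i) → F)) : Prop :=
  ∀ c : (∀ j, Fin (n j)) → F,
    (∃ a : ι → ((∀ j, Fin (n j)) → F), (∀ i, axisIn C i (a i)) ∧ c = ∑ i, a i) →
    ∃ a : ι → ((∀ j, Fin (n j)) → F), (∀ i, axisIn C i (a i)) ∧ c = ∑ i, a i ∧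
      ρ * (∑ i, (lineCnt i (a i) : ℝ)) ≤ (gwt c : ℝ)

end RTC

/-!
A bad `U` meets some `α`-sparse `m`-dimensional `V` in dimension at least `k = ⌈m/2⌉`, so it
contains a `k`-dimensional `W ≤ V`. Each sparse `V` is spanned by `m` vectors of the Hamming ball
of radius `αn`, whose volume is at most `q^(n H_q(α)) ≤ q^(r/8)`; so there are at most
`q^(rm/8)` such `V`. Each `V` has at most `4 q^(k(m-k))` subspaces `W` of dimension `k`, and a
fixed `W` lies in at most a `q^(-kr)` fraction of `Gr(n, n-r)`. As `m/2 ≤ k` and `m ≤ r`, the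
product is at most `4 q^(-rm/8) |Gr(n, n-r)|`, and summing the geometric series over `m` gives
the bound.
-/

open Module

theorem Nat.card_subtype_le_sum_of_exists {α ι : Type*} [Finite α] [Fintype ι] {P : α → Prop}
    {Q : ι → α → Prop} (h : ∀ a, P a → ∃ i, Q i a) :
    Nat.card {a // P a} ≤ ∑ i, Nat.card {a // Q i a} := by
  classical
  have := Fintype.ofFinite α
  simp only [Nat.card_eq_fintype_card, Fintype.card_subtype]
  calc #{a | P a} ≤ #(univ.biUnion fun i => {a | Q i a}) :=
        card_le_card fun a ha => by simpa using h a (by simpa using ha)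
    _ ≤ _ := card_biUnion_le

theorem Nat.card_subtype_le_mul_of_exists {α ι : Type*} [Finite α] [Finite ι] {P : α → Prop}
    {Q : ι → α → Prop} (h : ∀ a, P a → ∃ i, Q i a) {B : ℝ}
    (hB : ∀ i, (Nat.card {a // Q i a} : ℝ) ≤ B) :
    (Nat.card {a // P a} : ℝ) ≤ Nat.card ι * B := by
  have := Fintype.ofFinite ι
  calc (Nat.card {a // P a} : ℝ) ≤ ∑ i, (Nat.card {a // Q i a} : ℝ) := by
        exact_mod_cast Nat.card_subtype_le_sum_of_exists h
    _ ≤ ∑ _i : ι, B := sum_le_sum fun i _ => hB i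
    _ = Nat.card ι * B := by simp [Nat.card_eq_fintype_card]

theorem one_sub_sum_le_prod_one_sub {ι : Type*} (s : Finset ι) {f : ι → ℝ}
    (h0 : ∀ i ∈ s, 0 ≤ f i) (h1 : ∀ i ∈ s, f i ≤ 1) :
    1 - ∑ i ∈ s, f i ≤ ∏ i ∈ s, (1 - f i) := by
  classical
  induction s using Finset.induction_on with
  | empty => simp
  | insert a s ha ih =>
    rw [sum_insert ha, prod_insert ha]
    have ih := ih (fun i hi => h0 i (mem_insert_of_mem hi)) fun i hi => h1 i (mem_insert_of_mem hi)
    have hsum : 0 ≤ ∑ i ∈ s, f i := sum_nonneg fun i hi => h0 i (mem_insert_of_mem hi)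
    nlinarith [h0 a (mem_insert_self a s), h1 a (mem_insert_self a s)]

/-- Split off the factor `1 - x`; the remaining factors lose at most `x² / (1 - x) ≤ 1/2`. -/
theorem quarter_le_prod_one_sub_pow {x : ℝ} (hx0 : 0 ≤ x) (hx : x ≤ 1 / 2) (D : ℕ) :
    1 / 4 ≤ ∏ j ∈ range D, (1 - x ^ (j + 1)) := by
  rcases D with _ | D
  · norm_num
  have hgeom : ∑ j ∈ range D, x ^ (j + 2) ≤ 1 / 2 := by
    have h := geom_sum_Ico_le_of_lt_one (m := 0) (n := D) hx0 (by linarith)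
    rw [Nat.Ico_zero_eq_range, pow_zero] at h
    calc ∑ j ∈ range D, x ^ (j + 2) = x ^ 2 * ∑ j ∈ range D, x ^ j := by
          rw [mul_sum]; exact sum_congr rfl fun j _ => by ring
      _ ≤ x ^ 2 * (1 / (1 - x)) := by gcongr
      _ ≤ 1 / 2 := by
          rw [mul_one_div, div_le_iff₀ (by linarith)]; nlinarith
  have htail := one_sub_sum_le_prod_one_sub (range D) (f := fun j => x ^ (j + 2))
    (fun _ _ => by positivity) fun j _ => pow_le_one₀ hx0 (by linarith)
  rw [prod_range_succ']
  nlinarith [prod_nonneg fun j (_ : j ∈ range D) => sub_nonneg.mpr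
    (pow_le_one₀ (n := j + 1 + 1) hx0 (by linarith))]

namespace RTC

section QBinom

variable {q : ℕ}

theorem qBinom_eq_prod_div (hq : q ≠ 0) {N D : ℕ} (hD : D ≤ N) :
    qBinom q N D = (∏ i ∈ range D, ((q : ℝ) ^ N - (q : ℝ) ^ i)) /
      ∏ i ∈ range D, ((q : ℝ) ^ D - (q : ℝ) ^ i) := by
  rw [qBinom, ← prod_div_distrib]
  refine prod_congr rfl fun i hi => ?_
  have hiD : i ≤ D := (mem_range.mp hi).le
  have hpow : ∀ M, i ≤ M → (q : ℝ) ^ M - (q : ℝ) ^ i = (q : ℝ) ^ i * ((q : ℝ) ^ (M - i) - 1) :=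
    fun M hM => by rw [mul_sub, mul_one, ← pow_add, Nat.add_sub_cancel' hM]
  rw [hpow N (hiD.trans hD), hpow D hiD, mul_div_mul_left _ _ (by positivity)]

theorem qBinom_nonneg (hq : 1 ≤ q) (N D : ℕ) : 0 ≤ qBinom q N D :=
  prod_nonneg fun i _ => div_nonneg (sub_nonneg.mpr (one_le_pow₀ (by exact_mod_cast hq)))
    (sub_nonneg.mpr (one_le_pow₀ (by exact_mod_cast hq)))

theorem qBinom_eq_prod_mul_qBinom_sub {N D k : ℕ} (hk : k ≤ D) :
    qBinom q N D = (∏ i ∈ range k, ((q : ℝ) ^ (N - i) - 1) / ((q : ℝ) ^ (D - i) - 1)) *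
      qBinom q (N - k) (D - k) := by
  obtain ⟨j, rfl⟩ := Nat.exists_eq_add_of_le hk
  rw [qBinom, qBinom, Nat.add_sub_cancel_left, prod_range_add]
  simp only [Nat.sub_add_eq, Nat.add_sub_cancel_left]

theorem qBinom_sub_mul_pow_le (hq : 2 ≤ q) {N D k : ℕ} (hk : k ≤ D) (hD : D ≤ N) :
    qBinom q (N - k) (D - k) * (q : ℝ) ^ (k * (N - D)) ≤ qBinom q N D := by
  have hq1 : (1 : ℝ) < q := by exact_mod_cast hq
  rw [qBinom_eq_prod_mul_qBinom_sub hk, mul_comm, pow_mul',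
    show ((q : ℝ) ^ (N - D)) ^ k = ∏ _i ∈ range k, (q : ℝ) ^ (N - D) by simp]
  refine mul_le_mul_of_nonneg_right (prod_le_prod (fun _ _ => by positivity) fun i hi => ?_)
    (qBinom_nonneg (by omega) _ _)
  have hiD := mem_range.mp hi
  have hden : (0 : ℝ) < (q : ℝ) ^ (D - i) - 1 := sub_pos.mpr (one_lt_pow₀ hq1 (by omega))
  rw [le_div_iff₀ hden, mul_sub, mul_one, ← pow_add, Nat.sub_add_sub_cancel hD (by omega)]
  linarith [one_le_pow₀ (M₀ := ℝ) (n := N - D) hq1.le]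

theorem qBinom_le_four_mul_pow (hq : 2 ≤ q) {N D : ℕ} (hD : D ≤ N) :
    qBinom q N D ≤ 4 * (q : ℝ) ^ (D * (N - D)) := by
  have hq1 : (1 : ℝ) < q := by exact_mod_cast hq
  have hfactor : ∀ i ∈ range D, ((q : ℝ) ^ (N - i) - 1) / ((q : ℝ) ^ (D - i) - 1) ≤
      (q : ℝ) ^ (N - D) / (1 - (q : ℝ)⁻¹ ^ (D - i)) := by
    intro i hi
    have hiD := mem_range.mp hi
    set a := (q : ℝ) ^ (D - i)
    have ha : 1 < a := one_lt_pow₀ hq1 (by omega)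
    rw [inv_pow, show (q : ℝ) ^ (N - i) = (q : ℝ) ^ (N - D) * a by
      rw [← pow_add]; congr 1; omega]
    rw [div_le_div_iff₀ (by linarith) (sub_pos.mpr (inv_lt_one_of_one_lt₀ ha))]
    have hexpand : ((q : ℝ) ^ (N - D) * a - 1) * (1 - a⁻¹) =
        (q : ℝ) ^ (N - D) * (a - 1) - (1 - a⁻¹) := by
      field_simp
    linarith [inv_le_one_of_one_le₀ ha.le]
  have hprod : 1 / 4 ≤ ∏ i ∈ range D, (1 - (q : ℝ)⁻¹ ^ (D - i)) := by
    rw [← prod_range_reflect]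
    convert quarter_le_prod_one_sub_pow (x := (q : ℝ)⁻¹) (by positivity) (by
      rw [one_div, inv_le_inv₀ (by positivity) two_pos]; exact_mod_cast hq) D using 3 with j hj
    have := mem_range.mp hj
    congr 1
    omega
  calc qBinom q N D ≤ ∏ i ∈ range D, ((q : ℝ) ^ (N - D) / (1 - (q : ℝ)⁻¹ ^ (D - i))) :=
        prod_le_prod (fun i _ => div_nonneg (sub_nonneg.mpr (one_le_pow₀ hq1.le))
          (sub_nonneg.mpr (one_le_pow₀ hq1.le))) hfactor
    _ = (q : ℝ) ^ (D * (N - D)) / ∏ i ∈ range D, (1 - (q : ℝ)⁻¹ ^ (D - i)) := by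
        rw [prod_div_distrib, prod_const, card_range, ← pow_mul, mul_comm]
    _ ≤ (q : ℝ) ^ (D * (N - D)) / (1 / 4) := by gcongr
    _ = 4 * (q : ℝ) ^ (D * (N - D)) := by ring

end QBinom

theorem rpow_neg_mul_Hq_le {q n b : ℕ} (hq : 2 ≤ q) {α : ℝ} (hα0 : 0 ≤ α)
    (hα1 : α ≤ 1 - 1 / q) (hbn : b ≤ n) (hbα : (b : ℝ) ≤ α * n) :
    (q : ℝ) ^ (-(n * Hq q α)) ≤ (1 - α) ^ (n - b) * (α / (q - 1)) ^ b := by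
  rcases hα0.eq_or_lt with rfl | hα0
  · obtain rfl : b = 0 := by exact_mod_cast le_antisymm (by simpa using hbα) b.cast_nonneg
    simp [Hq]
  have hq1 : (1 : ℝ) < q := by exact_mod_cast hq
  have hα1' : 0 < 1 - α := by linarith [one_div_pos.mpr (by positivity : (0 : ℝ) < q)]
  have hlogq : 0 < Real.log q := Real.log_pos hq1
  -- `α ≤ 1 - 1/q` says exactly that `α ≤ (q - 1)(1 - α)`.
  have hlog : Real.log α ≤ Real.log (q - 1) + Real.log (1 - α) := by
    rw [← Real.log_mul (by linarith) hα1'.ne']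
    refine Real.log_le_log hα0 ?_
    have := mul_le_mul_of_nonneg_right hα1 (by positivity : (0 : ℝ) ≤ q)
    rw [sub_mul, one_mul, one_div, inv_mul_cancel₀ (by positivity)] at this
    nlinarith
  rw [Real.rpow_def_of_pos (by positivity), ← Real.exp_log (by positivity : (0 : ℝ) <
      (1 - α) ^ (n - b) * (α / (q - 1)) ^ b), Real.exp_le_exp, Real.log_mul (by positivity)
      (by positivity), Real.log_pow, Real.log_pow, Real.log_div hα0.ne' (by linarith),
      Nat.cast_sub hbn, Hq]
  simp only [Real.logb]
  field_simp
  nlinarith [mul_nonneg (sub_nonneg.mpr hbα)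
    (by linarith : 0 ≤ Real.log (q - 1) + Real.log (1 - α) - Real.log α)]

theorem vwt_eq_card_filter {F : Type*} [Field F] [DecidableEq F] {n : ℕ} (v : Fin n → F) :
    vwt v = #{i | v i ≠ 0} := by
  rw [vwt, Nat.card_eq_fintype_card, Fintype.card_subtype]

section HammingBall

variable {F : Type*} [Field F] [Fintype F]

local notation "q" => Fintype.card F

/-- Each `v` carries the weight `(1 - α)^(n - |v|) (α / (q - 1))^|v|`; these weights sum to
`1`, and each weight in the ball is at least `q^(-n H_q(α))`. -/
theorem natCard_vwt_le_le_rpow_Hq {n : ℕ} {α : ℝ} (hα0 : 0 ≤ α) (hα1 : α ≤ 1 - 1 / q) :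
    (Nat.card {v : Fin n → F // (vwt v : ℝ) ≤ α * n} : ℝ) ≤ (q : ℝ) ^ (n * Hq q α) := by
  classical
  have hq : (1 : ℝ) < q := by exact_mod_cast Fintype.one_lt_card
  let w : F → ℝ := fun x => if x = 0 then 1 - α else α / (q - 1)
  have hw : ∑ x, w x = 1 := by
    rw [← add_sum_erase _ _ (mem_univ 0), sum_congr rfl fun x hx => if_neg (ne_of_mem_erase hx),
      sum_const, card_erase_of_mem (mem_univ 0), card_univ, nsmul_eq_mul,
      Nat.cast_pred Fintype.card_pos]
    simp only [w, if_true]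
    rw [mul_div_cancel₀ _ (sub_ne_zero.mpr hq.ne'), sub_add_cancel]
  have hweight (v : Fin n → F) :
      ∏ i, w (v i) = (1 - α) ^ (n - vwt v) * (α / (q - 1)) ^ vwt v := by
    have hn := card_filter_add_card_filter_not (s := univ) (fun i => v i = 0)
    rw [card_univ, Fintype.card_fin] at hn
    rw [prod_ite, prod_const, prod_const, vwt_eq_card_filter, ← Nat.eq_sub_of_add_eq hn]
  have hw0 (x : F) : 0 ≤ w x := by
    have : 0 ≤ 1 / (q : ℝ) := by positivity
    dsimp only [w]
    split_ifs
    · linarith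
    · exact div_nonneg hα0 (by linarith)
  set ball : Finset (Fin n → F) := {v | (vwt v : ℝ) ≤ α * n}
  have hlow (v : Fin n → F) (hv : v ∈ ball) : (q : ℝ) ^ (-(n * Hq q α)) ≤ ∏ i, w (v i) := by
    rw [hweight]
    refine rpow_neg_mul_Hq_le Fintype.one_lt_card hα0 hα1 ?_ (mem_filter.mp hv).2
    simpa [vwt_eq_card_filter] using card_filter_le univ fun i => v i ≠ 0
  have key : (#ball : ℝ) * (q : ℝ) ^ (-(n * Hq q α)) ≤ 1 :=
    calc (#ball : ℝ) * (q : ℝ) ^ (-(n * Hq q α)) = ∑ v ∈ ball, (q : ℝ) ^ (-(n * Hq q α)) := by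
          rw [sum_const, nsmul_eq_mul]
      _ ≤ ∑ v ∈ ball, ∏ i, w (v i) := sum_le_sum hlow
      _ ≤ ∑ v : Fin n → F, ∏ i, w (v i) :=
          sum_le_sum_of_subset_of_nonneg (subset_univ _) fun v _ _ => prod_nonneg fun i _ => hw0 _
      _ = 1 := by rw [← Fintype.sum_pow, hw, one_pow]
  rw [Nat.card_eq_fintype_card, Fintype.card_subtype]
  rwa [Real.rpow_neg (by positivity), ← div_eq_mul_inv, div_le_one (by positivity)] at key

end HammingBall

theorem natCard_sparse_finrank_eq_le {F : Type*} [Field F] [Fintype F] {n : ℕ} (α : ℝ) (m : ℕ) :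
    Nat.card {V : Submodule F (Fin n → F) // Sparse α V ∧ finrank F V = m} ≤
      Nat.card {v : Fin n → F // (vwt v : ℝ) ≤ α * n} ^ m := by
  have hspan (V : {V : Submodule F (Fin n → F) // Sparse α V ∧ finrank F V = m}) :
      ∃ g : Fin m → {v : Fin n → F // (vwt v : ℝ) ≤ α * n},
        Submodule.span F (Set.range (Subtype.val ∘ g)) = V.1 := by
    obtain ⟨_, ⟨S, hS, rfl⟩, rfl⟩ := V
    obtain ⟨f, hfS, hfspan, -⟩ := Submodule.exists_fun_fin_finrank_span_eq F S
    exact ⟨fun i => ⟨f i, hS _ (hfS i)⟩, hfspan⟩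
  choose g hg using hspan
  calc _ ≤ Nat.card (Fin m → {v : Fin n → F // (vwt v : ℝ) ≤ α * n}) :=
        Nat.card_le_card_of_injective g fun V V' h => Subtype.ext (by rw [← hg V, ← hg V', h])
    _ = _ := by rw [Nat.card_fun, Nat.card_fin]

theorem natCard_sparse_finrank_eq_le_rpow {F : Type*} [Field F] [Fintype F] {n : ℕ} {α : ℝ}
    (hα0 : 0 ≤ α) (hα1 : α ≤ 1 - 1 / Fintype.card F) (m : ℕ) :
    (Nat.card {V : Submodule F (Fin n → F) // Sparse α V ∧ finrank F V = m} : ℝ) ≤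
      (Fintype.card F : ℝ) ^ (n * Hq (Fintype.card F) α * m) :=
  calc _ ≤ (Nat.card {v : Fin n → F // (vwt v : ℝ) ≤ α * n} : ℝ) ^ m := by
        exact_mod_cast natCard_sparse_finrank_eq_le α m
    _ ≤ ((Fintype.card F : ℝ) ^ (n * Hq (Fintype.card F) α)) ^ m :=
        pow_le_pow_left₀ (by positivity) (natCard_vwt_le_le_rpow_Hq hα0 hα1) m
    _ = _ := by rw [← Real.rpow_mul_natCast (by positivity)]

end RTC

section Subspaces

variable {F V : Type*} [Field F] [AddCommGroup V] [Module F V]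

theorem Submodule.exists_le_finrank_eq [FiniteDimensional F V] (X : Submodule F V) {k : ℕ}
    (hk : k ≤ finrank F X) : ∃ W ≤ X, finrank F W = k := by
  obtain ⟨f, hf⟩ := exists_linearIndependent_of_le_finrank hk
  refine ⟨(Submodule.span F (Set.range f)).map X.subtype, Submodule.map_subtype_le _ _, ?_⟩
  rw [Submodule.finrank_map_subtype_eq, finrank_span_eq_card hf, Fintype.card_fin]

theorem Submodule.finrank_map_mkQ_add_finrank [FiniteDimensional F V] {W U : Submodule F V}
    (h : W ≤ U) : finrank F (U.map W.mkQ) + finrank F W = finrank F U := by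
  have := LinearMap.finrank_range_add_finrank_ker (W.mkQ.domRestrict U)
  rwa [LinearMap.range_domRestrict, LinearMap.ker_domRestrict, Submodule.ker_mkQ,
    (Submodule.comapSubtypeEquivOfLe h).finrank_eq] at this

variable [Finite V]

theorem natCard_finrank_eq_ge_le (W : Submodule F V) (d : ℕ) :
    Nat.card {U : Submodule F V // finrank F U = d ∧ W ≤ U} ≤
      Nat.card {U : Submodule F (V ⧸ W) // finrank F U = d - finrank F W} := by
  have : Module.Finite F V := Module.Finite.of_finite
  have : Finite (V ⧸ W) := Finite.of_surjective _ W.mkQ_surjective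
  refine Nat.card_le_card_of_injective (fun U => ⟨U.1.map W.mkQ, ?_⟩) fun U U' h => ?_
  · have := Submodule.finrank_map_mkQ_add_finrank U.2.2
    omega
  · have := congrArg (fun X => Submodule.comap W.mkQ X.1) h
    simp only [Submodule.comap_map_mkQ, sup_eq_right.mpr U.2.2, sup_eq_right.mpr U'.2.2] at this
    exact Subtype.ext this

theorem natCard_le_finrank_eq_le (X : Submodule F V) (k : ℕ) :
    Nat.card {W : Submodule F V // W ≤ X ∧ finrank F W = k} ≤
      Nat.card {W : Submodule F X // finrank F W = k} := by
  refine Nat.card_le_card_of_injective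
    (fun W => ⟨W.1.comap X.subtype, (Submodule.comapSubtypeEquivOfLe W.2.1).finrank_eq.trans W.2.2⟩)
    fun W W' h => Subtype.ext ?_
  have := congrArg (fun Y => Submodule.map X.subtype Y.1) h
  simpa only [Submodule.map_comap_subtype, inf_eq_right.mpr W.2.1, inf_eq_right.mpr W'.2.1]
    using this

end Subspaces

section Grassmannian

variable {F V : Type*} [Field F] [Fintype F] [AddCommGroup V] [Module F V] [Finite V]

local notation "q" => Fintype.card F

/-- Every `D`-dimensional subspace is spanned by exactly as many independent `D`-tuples as
there are independent `D`-tuples in `F^D`. -/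
theorem natCard_finrank_eq_mul_prod {D : ℕ} (hD : D ≤ finrank F V) :
    Nat.card {U : Submodule F V // finrank F U = D} * ∏ i : Fin D, (q ^ D - q ^ (i : ℕ)) =
      ∏ i : Fin D, (q ^ finrank F V - q ^ (i : ℕ)) := by
  have : Module.Finite F V := Module.Finite.of_finite
  let toSpan : {s : Fin D → V // LinearIndependent F s} → {U : Submodule F V // finrank F U = D} :=
    fun s => ⟨Submodule.span F (Set.range s.1), by rw [finrank_span_eq_card s.2, Fintype.card_fin]⟩
  have hfiber (U : {U : Submodule F V // finrank F U = D}) :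
      {s // toSpan s = U} ≃ {t : Fin D → U.1 // LinearIndependent F t} :=
    { toFun s := ⟨fun i => ⟨s.1.1 i, by
        rw [← congrArg Subtype.val s.2]; exact Submodule.subset_span (Set.mem_range_self i)⟩,
        .of_comp U.1.subtype s.1.2⟩
      invFun t := ⟨⟨U.1.subtype ∘ t.1, t.2.map' _ U.1.ker_subtype⟩, Subtype.ext <| by
        change Submodule.span F (Set.range (U.1.subtype ∘ t.1)) = U.1
        rw [Set.range_comp, ← Submodule.map_span, t.2.span_eq_top_of_card_eq_finrank'
          (by rw [Fintype.card_fin, U.2]), Submodule.map_top, Submodule.range_subtype]⟩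
      left_inv _ := rfl
      right_inv _ := rfl }
  have : Fintype {U : Submodule F V // finrank F U = D} := Fintype.ofFinite _
  rw [← card_linearIndependent hD, ← Nat.card_congr (Equiv.sigmaFiberEquiv toSpan), Nat.card_sigma]
  simp only [Nat.card_congr (hfiber _)]
  rw [sum_congr rfl fun U _ => by rw [card_linearIndependent (le_of_eq U.2.symm), U.2], sum_const,
    card_univ, smul_eq_mul, Nat.card_eq_fintype_card]

theorem natCard_finrank_eq_qBinom {D : ℕ} (hD : D ≤ finrank F V) :
    (Nat.card {U : Submodule F V // finrank F U = D} : ℝ) = RTC.qBinom q (finrank F V) D := by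
  have hcast : ∀ N, D ≤ N → ((∏ i : Fin D, (q ^ N - q ^ (i : ℕ)) : ℕ) : ℝ) =
      ∏ i ∈ range D, ((q : ℝ) ^ N - (q : ℝ) ^ i) := fun N hN => by
    rw [Nat.cast_prod, ← Fin.prod_univ_eq_prod_range]
    refine prod_congr rfl fun i _ => ?_
    rw [Nat.cast_sub (Nat.pow_le_pow_right Fintype.card_pos (by omega)), Nat.cast_pow,
      Nat.cast_pow]
  have hden : ∏ i ∈ range D, ((q : ℝ) ^ D - (q : ℝ) ^ i) ≠ 0 :=
    prod_ne_zero_iff.mpr fun i hi => sub_ne_zero.mpr (pow_right_injective₀ (by positivity)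
      (by exact_mod_cast Fintype.one_lt_card.ne') |>.ne (mem_range.mp hi).ne')
  rw [RTC.qBinom_eq_prod_div Fintype.card_ne_zero hD, eq_div_iff hden, ← hcast D le_rfl,
    ← hcast _ hD]
  exact_mod_cast natCard_finrank_eq_mul_prod hD

theorem natCard_finrank_eq_ge_mul_pow_le (W : Submodule F V) {d : ℕ} (hd : d ≤ finrank F V) :
    (Nat.card {U : Submodule F V // finrank F U = d ∧ W ≤ U} : ℝ) *
        (q : ℝ) ^ (finrank F W * (finrank F V - d)) ≤ RTC.qBinom q (finrank F V) d := by
  have : Module.Finite F V := Module.Finite.of_finite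
  by_cases hWd : finrank F W ≤ d
  · have : Finite (V ⧸ W) := Finite.of_surjective _ W.mkQ_surjective
    have hquot := W.finrank_quotient (R := F)
    calc _ ≤ (Nat.card {U : Submodule F (V ⧸ W) // finrank F U = d - finrank F W} : ℝ) *
            (q : ℝ) ^ (finrank F W * (finrank F V - d)) := by
          gcongr; exact natCard_finrank_eq_ge_le W d
      _ = RTC.qBinom q (finrank F V - finrank F W) (d - finrank F W) *
            (q : ℝ) ^ (finrank F W * (finrank F V - d)) := by
          rw [natCard_finrank_eq_qBinom (by omega), hquot]
      _ ≤ _ := RTC.qBinom_sub_mul_pow_le Fintype.one_lt_card hWd hd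
  · have : IsEmpty {U : Submodule F V // finrank F U = d ∧ W ≤ U} :=
      ⟨fun U => hWd (U.2.1 ▸ Submodule.finrank_mono U.2.2)⟩
    rw [Nat.card_of_isEmpty, Nat.cast_zero, zero_mul]
    exact RTC.qBinom_nonneg Fintype.card_pos _ _

theorem natCard_finrank_le_finrank_inf_le (V₀ : Submodule F V) {m k d : ℕ}
    (hV₀ : finrank F V₀ = m) (hkm : k ≤ m) (hd : d ≤ finrank F V) :
    (Nat.card {U : Submodule F V // finrank F U = d ∧ k ≤ finrank F ↥(U ⊓ V₀)} : ℝ) ≤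
      4 * (q : ℝ) ^ (k * (m - k)) *
        (RTC.qBinom q (finrank F V) d / (q : ℝ) ^ (k * (finrank F V - d))) := by
  have : Module.Finite F V := Module.Finite.of_finite
  have hsub : (Nat.card {W : Submodule F V // W ≤ V₀ ∧ finrank F W = k} : ℝ) ≤
      4 * (q : ℝ) ^ (k * (m - k)) := by
    calc _ ≤ (Nat.card {W : Submodule F V₀ // finrank F W = k} : ℝ) := by
          exact_mod_cast natCard_le_finrank_eq_le V₀ k
      _ = RTC.qBinom q m k := by rw [natCard_finrank_eq_qBinom (by omega), hV₀]
      _ ≤ _ := RTC.qBinom_le_four_mul_pow Fintype.one_lt_card hkm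
  have hsup (W : {W : Submodule F V // W ≤ V₀ ∧ finrank F W = k}) :
      (Nat.card {U : Submodule F V // finrank F U = d ∧ W.1 ≤ U} : ℝ) ≤
        RTC.qBinom q (finrank F V) d / (q : ℝ) ^ (k * (finrank F V - d)) := by
    rw [le_div_iff₀ (by positivity)]
    simpa only [W.2.2] using natCard_finrank_eq_ge_mul_pow_le W.1 hd
  refine (Nat.card_subtype_le_mul_of_exists (fun U hU => ?_) hsup).trans
    (mul_le_mul_of_nonneg_right hsub (div_nonneg (RTC.qBinom_nonneg Fintype.card_pos _ _)
      (by positivity)))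
  obtain ⟨W, hW, hWk⟩ := (U ⊓ V₀).exists_le_finrank_eq hU.2
  exact ⟨⟨W, hW.trans inf_le_right, hWk⟩, hU.1, hW.trans inf_le_left⟩

theorem natCard_exists_finrank_inf_ge_half_le {𝒮 : Submodule F V → Prop} {m r : ℕ}
    (hmr : m ≤ r) (hr : r ≤ finrank F V)
    (h𝒮 : (Nat.card {V₀ // 𝒮 V₀ ∧ finrank F V₀ = m} : ℝ) ≤ (q : ℝ) ^ ((r : ℝ) * m / 8)) :
    (Nat.card {U : Submodule F V // finrank F U = finrank F V - r ∧ ∃ V₀, 𝒮 V₀ ∧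
        finrank F V₀ = m ∧ (m : ℝ) / 2 ≤ finrank F ↥(U ⊓ V₀)} : ℝ) ≤
      4 * ((q : ℝ) ^ (-(r : ℝ) / 8)) ^ m * RTC.qBinom q (finrank F V) (finrank F V - r) := by
  set k := (m + 1) / 2
  have hkm : k ≤ m := by omega
  set G := RTC.qBinom q (finrank F V) (finrank F V - r)
  have hG : 0 ≤ G := RTC.qBinom_nonneg Fintype.card_pos _ _
  have hq : (1 : ℝ) ≤ q := by exact_mod_cast Fintype.card_pos
  -- `k ≥ m / 2` and `m ≤ r` give `r m / 4 + k (m - k) ≤ k r`.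
  have hexp : (q : ℝ) ^ ((r : ℝ) * m / 8) * (q : ℝ) ^ (k * (m - k)) / (q : ℝ) ^ (k * r) ≤
      ((q : ℝ) ^ (-(r : ℝ) / 8)) ^ m := by
    rw [div_le_iff₀ (by positivity), ← Real.rpow_mul_natCast (by positivity),
      ← Real.rpow_natCast _ (k * (m - k)), ← Real.rpow_natCast _ (k * r), ← Real.rpow_add
      (by positivity), ← Real.rpow_add (by positivity)]
    refine Real.rpow_le_rpow_of_exponent_le hq ?_
    have hmk : (m : ℝ) ≤ 2 * k := by exact_mod_cast (by omega : m ≤ 2 * k)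
    have hmr' : (m : ℝ) ≤ r := by exact_mod_cast hmr
    push_cast [Nat.cast_sub hkm]
    nlinarith [mul_nonneg (sub_nonneg.mpr hmr') (sub_nonneg.mpr hmk)]
  calc _ ≤ (Nat.card {V₀ // 𝒮 V₀ ∧ finrank F V₀ = m} : ℝ) * (4 * (q : ℝ) ^ (k * (m - k)) *
          (G / (q : ℝ) ^ (k * (finrank F V - (finrank F V - r))))) := by
        refine Nat.card_subtype_le_mul_of_exists (fun U hU => ?_)
          fun V₀ => natCard_finrank_le_finrank_inf_le V₀.1 V₀.2.2 hkm (Nat.sub_le _ _)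
        obtain ⟨hUd, V₀, hV₀, hV₀m, hhalf⟩ := hU
        have : m ≤ 2 * finrank F ↥(U ⊓ V₀) := by
          exact_mod_cast (by linarith : (m : ℝ) ≤ 2 * finrank F ↥(U ⊓ V₀))
        exact ⟨⟨V₀, hV₀, hV₀m⟩, hUd, (by omega : k ≤ finrank F ↥(U ⊓ V₀))⟩
    _ ≤ (q : ℝ) ^ ((r : ℝ) * m / 8) * (4 * (q : ℝ) ^ (k * (m - k)) * (G / (q : ℝ) ^ (k * r))) := by
        rw [Nat.sub_sub_self hr]
        gcongr
    _ = 4 * ((q : ℝ) ^ ((r : ℝ) * m / 8) * (q : ℝ) ^ (k * (m - k)) / (q : ℝ) ^ (k * r)) * G := by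
        ring
    _ ≤ _ := by gcongr

theorem natCard_exists_exists_finrank_inf_ge_half_le {𝒮 : Submodule F V → Prop} {r : ℕ}
    (hr : r ≤ finrank F V)
    (h𝒮 : ∀ m, (Nat.card {V₀ // 𝒮 V₀ ∧ finrank F V₀ = m} : ℝ) ≤ (q : ℝ) ^ ((r : ℝ) * m / 8)) :
    (Nat.card {U : Submodule F V // finrank F U = finrank F V - r ∧ ∃ m : ℕ, 1 ≤ m ∧ m ≤ r ∧
        ∃ V₀, 𝒮 V₀ ∧ finrank F V₀ = m ∧ (m : ℝ) / 2 ≤ finrank F ↥(U ⊓ V₀)} : ℝ) ≤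
      4 * (q : ℝ) ^ (-(r : ℝ) / 8) / (1 - (q : ℝ) ^ (-(r : ℝ) / 8)) *
        Nat.card {U : Submodule F V // finrank F U = finrank F V - r} := by
  set t := (q : ℝ) ^ (-(r : ℝ) / 8)
  set G := RTC.qBinom q (finrank F V) (finrank F V - r)
  have hq : (1 : ℝ) < q := by exact_mod_cast Fintype.one_lt_card
  have hgeom : ∑ m ∈ Ico 1 (r + 1), t ^ m ≤ t / (1 - t) := by
    rcases r.eq_zero_or_pos with rfl | hr
    · simp [t]
    have ht1 : t < 1 := Real.rpow_lt_one_of_one_lt_of_neg hq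
      (by have : (0 : ℝ) < r := by exact_mod_cast hr
          linarith)
    simpa only [pow_one] using geom_sum_Ico_le_of_lt_one (m := 1) (n := r + 1) (by positivity) ht1
  refine ((Nat.cast_le.mpr (Nat.card_subtype_le_sum_of_exists (ι := Ico 1 (r + 1))
    (Q := fun (m : Ico 1 (r + 1)) (U : Submodule F V) => finrank F U = finrank F V - r ∧
      ∃ V₀, 𝒮 V₀ ∧ finrank F V₀ = m ∧ ((m : ℕ) : ℝ) / 2 ≤ finrank F ↥(U ⊓ V₀))
    fun U ⟨hU, m, hm1, hmr, hV₀⟩ => ⟨⟨m, mem_Ico.mpr ⟨hm1, by omega⟩⟩, hU, hV₀⟩)).trans_eq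
      (Nat.cast_sum _ _)).trans ?_
  calc _ ≤ ∑ m : Ico 1 (r + 1), 4 * t ^ (m : ℕ) * G := sum_le_sum fun m _ =>
        natCard_exists_finrank_inf_ge_half_le (by have := mem_Ico.mp m.2; omega) hr (h𝒮 m)
    _ = 4 * (∑ m ∈ Ico 1 (r + 1), t ^ m) * G := by
        rw [sum_coe_sort (Ico 1 (r + 1)) fun m => 4 * t ^ m * G, mul_sum, sum_mul]
    _ ≤ 4 * (t / (1 - t)) * G := by gcongr; exact RTC.qBinom_nonneg Fintype.card_pos _ _
    _ = _ := by rw [natCard_finrank_eq_qBinom (Nat.sub_le _ _)]; ring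

end Grassmannian

theorem statement6_general (F : Type) [Field F] [Fintype F] (n r : ℕ) (R α : ℝ)
    (hRr : R * (n : ℝ) ≤ (r : ℝ)) (hrn : r ≤ n)
    (hα0 : 0 ≤ α) (hα1 : α ≤ 1 - 1 / (Fintype.card F : ℝ))
    (hHα : RTC.Hq (Fintype.card F) α = R / 8) :
    (Nat.card {U : Submodule F (Fin n → F) // Module.finrank F U = n - r ∧
        ∃ m : ℕ, 1 ≤ m ∧ m ≤ r ∧ ∃ V : Submodule F (Fin n → F),
          RTC.Sparse α V ∧ Module.finrank F V = m ∧
          (m : ℝ) / 2 ≤ (Module.finrank F ↥(U ⊓ V) : ℝ)} : ℝ) ≤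
      4 * (Fintype.card F : ℝ) ^ (-(r : ℝ) / 8) /
          (1 - (Fintype.card F : ℝ) ^ (-(r : ℝ) / 8)) *
        (Nat.card {U : Submodule F (Fin n → F) // Module.finrank F U = n - r} : ℝ) := by
  have hq : (1 : ℝ) < Fintype.card F := by exact_mod_cast Fintype.one_lt_card
  have hsparse (m : ℕ) : (Nat.card {V : Submodule F (Fin n → F) // RTC.Sparse α V ∧
      finrank F V = m} : ℝ) ≤ (Fintype.card F : ℝ) ^ ((r : ℝ) * m / 8) :=
    (RTC.natCard_sparse_finrank_eq_le_rpow hα0 hα1 m).trans <|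
      Real.rpow_le_rpow_of_exponent_le hq.le (by rw [hHα]; nlinarith [m.cast_nonneg (α := ℝ)])
  simpa only [finrank_fin_fun] using
    natCard_exists_exists_finrank_inf_ge_half_le (by rwa [finrank_fin_fun]) hsparse

/-- the number of subspaces `U ∈ Gr(n, n−r)` violating property `(*)` is at most
`(4·q^{−r/8}/(1 − q^{−r/8}))·|Gr(n, n−r)|`. -/
theorem statement6 (F : Type) [Field F] [Fintype F] (n r : ℕ) (R α : ℝ)
    (hR : 0 < R ∧ R < 1) (hRr : R * (n : ℝ) ≤ (r : ℝ)) (hrn : r ≤ n)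
    (hα0 : 0 ≤ α) (hα1 : α ≤ 1 - 1 / (Fintype.card F : ℝ))
    (hHα : RTC.Hq (Fintype.card F) α = R / 8) :
    (Nat.card {U : Submodule F (Fin n → F) // Module.finrank F U = n - r ∧
        ∃ m : ℕ, 1 ≤ m ∧ m ≤ r ∧ ∃ V : Submodule F (Fin n → F),
          RTC.Sparse α V ∧ Module.finrank F V = m ∧
          (m : ℝ) / 2 ≤ (Module.finrank F ↥(U ⊓ V) : ℝ)} : ℝ) ≤
      4 * (Fintype.card F : ℝ) ^ (-(r : ℝ) / 8) /
          (1 - (Fintype.card F : ℝ) ^ (-(r : ℝ) / 8)) *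
        (Nat.card {U : Submodule F (Fin n → F) // Module.finrank F U = n - r} : ℝ) :=
  statement6_general F n r R α hRr hrn hα0 hα1 hHα
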